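/- arXiv:2007.05792 — 5 statements merged into one kernel-verified Lean document; each statement's English description precedes it below -/
import Mathlib

section
/- Let X ⊆ ℤ² be finite and let v : ℤ² → ℤ satisfy Δv(x) ≤ 3 for all x ∈ X. Then v is recurrent in X if and only if the restriction of Δv to X is a recurrent sandpile configuration on X (i.e., Δv|_X has no forbidden subconfiguration). -/
/-!
STATEMENT 2: Let `X ⊆ ℤ²` be finite and `v : ℤ² → ℤ` satisfy `Δv(x) ≤ 3` for all `x ∈ X`.
Then `v` is recurrent in `X` if and only if the restriction of `Δv` to `X` is a recurrent
sandpile configuration on `X`, i.e. `Δv|_X` has no forbidden subconfiguration.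
A forbidden subconfiguration is a nonempty `Y ⊆ X` with `s(x) < indeg_Y(x)` for all `x ∈ Y`,
where `indeg_Y(x)` is the number of nearest neighbors of `x` lying in `Y`.
-/

abbrev Z2 := ℤ × ℤ

/-- Nearest-neighbor adjacency in `ℤ²`. -/
def adj (x y : Z2) : Prop := (x.1 - y.1).natAbs + (x.2 - y.2).natAbs = 1

/-- The discrete Laplacian on `ℤ²`: `Δw(x) = -4w(x) + Σ_{y∼x} w(y)`. -/
def lap (w : Z2 → ℤ) (x : Z2) : ℤ :=
  -(4 * w x) + (w (x.1 + 1, x.2) + w (x.1 - 1, x.2) + w (x.1, x.2 + 1) + w (x.1, x.2 - 1))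

/-- The outer boundary `∂X` of a subset `X ⊆ ℤ²`. -/
def outerBd (X : Set Z2) : Set Z2 := {y | y ∉ X ∧ ∃ x ∈ X, adj x y}

/-- `v` is recurrent in `X`: `Δv ≤ 3` on `X`, and `sup_Y (v−w) ≤ sup_{(X∖Y)∪∂X} (v−w)`
whenever `Δw ≤ 3` on a finite `Y ⊆ X` (the sup inequality expressed pointwise). -/
def RecurrentIn (v : Z2 → ℤ) (X : Set Z2) : Prop :=
  (∀ x ∈ X, lap v x ≤ 3) ∧
  ∀ w : Z2 → ℤ, ∀ Y : Set Z2, Y ⊆ X → Y.Finite →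
    (∀ x ∈ Y, lap w x ≤ 3) →
    ∀ y ∈ Y, ∃ z ∈ (X \ Y) ∪ outerBd X, v y - w y ≤ v z - w z

/-- `indeg_Y(x)`: the number of nearest neighbors of `x` in `ℤ²` that lie in `Y`. -/
noncomputable def indeg (Y : Set Z2) (x : Z2) : ℕ := {y : Z2 | adj x y ∧ y ∈ Y}.ncard

/-- `s` (a configuration on `X`) has a forbidden subconfiguration: a nonempty `Y ⊆ X`
with `s(x) < indeg_Y(x)` for all `x ∈ Y`. -/
def HasForbiddenSubconfig (X : Set Z2) (s : Z2 → ℤ) : Prop :=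
  ∃ Y : Set Z2, Y ⊆ X ∧ Y.Nonempty ∧ ∀ x ∈ Y, s x < (indeg Y x : ℤ)

open scoped Classical

def N (x : Z2) : Finset Z2 := {(x.1+1,x.2),(x.1-1,x.2),(x.1,x.2+1),(x.1,x.2-1)}

lemma mem_N {x y : Z2} : y ∈ N x ↔ adj x y := by
  simp only [N, Finset.mem_insert, Finset.mem_singleton, adj, Prod.ext_iff]
  constructor
  · intro h; omega
  · intro h; omega

lemma sum_N {M : Type*} [AddCommMonoid M] (f : Z2 → M) (x : Z2) :
    ∑ n ∈ N x, f n = f (x.1+1,x.2) + f (x.1-1,x.2) + f (x.1,x.2+1) + f (x.1,x.2-1) := by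
  have h1 : ((x.1+1,x.2) : Z2) ∉ ({(x.1-1,x.2),(x.1,x.2+1),(x.1,x.2-1)} : Finset Z2) := by
    simp only [Finset.mem_insert, Finset.mem_singleton, Prod.ext_iff, not_or]; omega
  have h2 : ((x.1-1,x.2) : Z2) ∉ ({(x.1,x.2+1),(x.1,x.2-1)} : Finset Z2) := by
    simp only [Finset.mem_insert, Finset.mem_singleton, Prod.ext_iff, not_or]; omega
  have h3 : ((x.1,x.2+1) : Z2) ∉ ({(x.1,x.2-1)} : Finset Z2) := by
    simp only [Finset.mem_singleton, Prod.ext_iff, not_and]; omega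
  rw [N, Finset.sum_insert h1, Finset.sum_insert h2, Finset.sum_insert h3,
    Finset.sum_singleton]
  abel

lemma card_N (x : Z2) : (N x).card = 4 := by
  rw [Finset.card_eq_sum_ones, sum_N (fun _ => (1:ℕ))]

lemma indeg_int (Y : Set Z2) (x : Z2) :
    (indeg Y x : ℤ) = ∑ n ∈ N x, (if n ∈ Y then (1:ℤ) else 0) := by
  have hset : {y : Z2 | adj x y ∧ y ∈ Y} = ↑((N x).filter (fun n => n ∈ Y)) := by
    ext y; simp [Finset.mem_filter, mem_N]
  rw [indeg, hset, Set.ncard_coe_finset, Finset.sum_boole]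

lemma lap_eq (w : Z2 → ℤ) (x : Z2) : lap w x = ∑ n ∈ N x, (w n - w x) := by
  rw [sum_N (fun n => w n - w x)]; simp only [lap]; ring

lemma lap_sub (v w : Z2 → ℤ) (x : Z2) :
    lap (fun z => v z - w z) x = lap v x - lap w x := by
  simp only [lap]; ring

theorem recurrent_iff_no_forbidden_subconfig (X : Set Z2) (hX : X.Finite)
    (v : Z2 → ℤ) (hv : ∀ x ∈ X, lap v x ≤ 3) :
    RecurrentIn v X ↔ ¬ HasForbiddenSubconfig X (lap v) := by
  constructor
  · -- recurrent → no forbidden subconfiguration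
    rintro ⟨-, hrec⟩ ⟨Y, hYX, ⟨y0, hy0⟩, hfb⟩
    set g : Z2 → ℤ := fun z => if z ∈ Y then 1 else 0 with hg
    set w : Z2 → ℤ := fun z => v z - g z with hw
    have hlapg : ∀ x ∈ Y, lap g x = (indeg Y x : ℤ) - 4 := by
      intro x hxY
      have h1 := indeg_int Y x
      rw [sum_N (fun n => if n ∈ Y then (1:ℤ) else 0)] at h1
      simp only [lap, hg, if_pos hxY]
      linarith
    have hlapw : ∀ x ∈ Y, lap w x ≤ 3 := by
      intro x hxY
      have h1 : lap w x = lap v x - lap g x := lap_sub v g x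
      have h2 := hlapg x hxY
      have h3 := hfb x hxY
      omega
    obtain ⟨z, hz, hle⟩ := hrec w Y hYX (hX.subset hYX) hlapw y0 hy0
    have hzY : z ∉ Y := by
      rcases hz with h | h
      · exact h.2
      · exact fun hc => h.1 (hYX hc)
    have e1 : v y0 - w y0 = 1 := by simp [hw, hg, if_pos hy0]
    have e2 : v z - w z = 0 := by simp [hw, hg, if_neg hzY]
    omega
  · -- no forbidden subconfiguration → recurrent
    intro hnf
    refine ⟨hv, ?_⟩
    intro w Y hYX hYfin hlapw y hyY
    by_contra hcon
    push_neg at hcon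
    set u : Z2 → ℤ := fun z => v z - w z with hu
    have hyF : y ∈ hYfin.toFinset := hYfin.mem_toFinset.mpr hyY
    obtain ⟨m, hmF, hmax⟩ := hYfin.toFinset.exists_max_image u ⟨y, hyF⟩
    set M : ℤ := u m with hM
    set Z : Set Z2 := {z ∈ Y | u z = M} with hZ
    have hZY : Z ⊆ Y := fun z hz => hz.1
    have hmZ : m ∈ Z := ⟨hYfin.mem_toFinset.mp hmF, rfl⟩
    refine hnf ⟨Z, hZY.trans hYX, ⟨m, hmZ⟩, ?_⟩
    intro x hxZ
    obtain ⟨hxY, hxM⟩ := hxZ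
    have hbound : ∀ n ∈ N x, u n - u x ≤ (if n ∈ Z then (0:ℤ) else -1) := by
      intro n hn
      have hadj : adj x n := mem_N.mp hn
      by_cases hnZ : n ∈ Z
      · rw [if_pos hnZ, hxM, hnZ.2]; omega
      · rw [if_neg hnZ, hxM]
        by_cases hnY : n ∈ Y
        · have h1 : u n ≤ M := hmax n (hYfin.mem_toFinset.mpr hnY)
          have h2 : u n ≠ M := fun h => hnZ ⟨hnY, h⟩
          omega
        · have hmem : n ∈ (X \ Y) ∪ outerBd X := by
            by_cases hnX : n ∈ X
            · exact Or.inl ⟨hnX, hnY⟩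
            · exact Or.inr ⟨hnX, x, hYX hxY, hadj⟩
          have h1 : v n - w n < v y - w y := hcon n hmem
          have h2 : u y ≤ M := hmax y hyF
          simp only [hu] at h2 ⊢
          omega
    have hsum : lap u x ≤ (indeg Z x : ℤ) - 4 := by
      rw [lap_eq]
      calc ∑ n ∈ N x, (u n - u x) ≤ ∑ n ∈ N x, (if n ∈ Z then (0:ℤ) else -1) :=
            Finset.sum_le_sum hbound
        _ = (indeg Z x : ℤ) - 4 := by
            have h2 : ∑ n ∈ N x, (if n ∈ Z then (0:ℤ) else -1)
                = ∑ n ∈ N x, ((if n ∈ Z then (1:ℤ) else 0) - 1) := by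
              refine Finset.sum_congr rfl fun n _ => ?_
              split_ifs <;> ring
            rw [indeg_int Z x, h2, Finset.sum_sub_distrib, Finset.sum_const, card_N]
            norm_num
            rw [Finset.card_filter]
            push_cast
            refine Finset.sum_congr rfl fun n _ => ?_
            by_cases h : n ∈ Z <;> simp [h]
    have h3 : lap w x ≤ 3 := hlapw x hxY
    have h4 : lap u x = lap v x - lap w x := lap_sub v w x
    omega
end

section
/- Let A be a real symmetric positive definite 2×2 matrix and k > 0, and let v be the minimal solution of the boundary value problem for E_{A,k}. Then v is recurrent in E_{A,k}. -/
open Matrix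

/-- The embedding of the lattice `ℤ²` into the Euclidean plane. -/
noncomputable def pt (x : Z2) : EuclideanSpace ℝ (Fin 2) :=
  (WithLp.equiv 2 (Fin 2 → ℝ)).symm ![(x.1 : ℝ), (x.2 : ℝ)]

/-- The quadratic form `q_A(x) = (1/2)xᵀAx`. -/
noncomputable def qA (A : Matrix (Fin 2) (Fin 2) ℝ) (x : EuclideanSpace ℝ (Fin 2)) : ℝ :=
  (1 / 2) * ((WithLp.equiv 2 (Fin 2 → ℝ) x) ⬝ᵥ A.mulVec (WithLp.equiv 2 (Fin 2 → ℝ) x))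

/-- The lattice ellipse `E_{A,k} = {x ∈ ℤ² : q_A(x) < k}`. -/
noncomputable def Elat (A : Matrix (Fin 2) (Fin 2) ℝ) (k : ℝ) : Set Z2 :=
  {x | qA A (pt x) < k}

/-- `v` solves the boundary value problem for `E_{A,k}`. -/
noncomputable def SolvesBVP (A : Matrix (Fin 2) (Fin 2) ℝ) (k : ℝ) (v : Z2 → ℤ) : Prop :=
  (∀ x ∈ Elat A k, lap v x ≤ 3) ∧ ∀ x, x ∉ Elat A k → 0 ≤ v x

/-- `v` is the pointwise-minimal solution of the boundary value problem for `E_{A,k}`. -/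
noncomputable def IsMinimalSolution (A : Matrix (Fin 2) (Fin 2) ℝ) (k : ℝ) (v : Z2 → ℤ) :
    Prop :=
  SolvesBVP A k v ∧ ∀ w, SolvesBVP A k w → ∀ x, v x ≤ w x

/-!
Given `w` with `Δw ≤ 3` on a finite `Y ⊆ E`, let `c` be the maximum of `v - w` over the finite,
nonempty set `(E ∖ Y) ∪ ∂E`. Lowering `v` to `min v (w + c)` on `Y` gives another solution of
the boundary value problem: at a point of `Y` the new function touches one of the two
supersolutions `v`, `w + c` from below, and the points just outside `Y` are not changed because
`v ≤ w + c` there. Minimality of `v` then forces `v ≤ w + c` on `Y`.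
-/

lemma mem_of_adj {x y : Z2} (h : adj x y) :
    y ∈ ({(x.1 + 1, x.2), (x.1 - 1, x.2), (x.1, x.2 + 1), (x.1, x.2 - 1)} : Set Z2) := by
  rcases x with ⟨x1, x2⟩
  rcases y with ⟨y1, y2⟩
  simp only [adj] at h
  simp only [Set.mem_insert_iff, Set.mem_singleton_iff, Prod.mk.injEq]
  omega

lemma outerBd_finite {X : Set Z2} (hX : X.Finite) : (outerBd X).Finite :=
  (hX.biUnion fun x _ => Set.toFinite
      ({(x.1 + 1, x.2), (x.1 - 1, x.2), (x.1, x.2 + 1), (x.1, x.2 - 1)} : Set Z2)).subset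
    fun _ ⟨_, _, hx, hxy⟩ => Set.mem_biUnion hx (mem_of_adj hxy)

lemma outerBd_nonempty {X : Set Z2} (hX : X.Finite) (hne : X.Nonempty) :
    (outerBd X).Nonempty := by
  obtain ⟨x, hx, hmax⟩ := Set.exists_max_image X Prod.fst hX hne
  refine ⟨(x.1 + 1, x.2), fun h => ?_, x, hx, by simp [adj]⟩
  have := hmax _ h
  omega

lemma lap_le_lap_of_eq_of_le {u v : Z2 → ℤ} {x : Z2} (hx : u x = v x)
    (hnbr : ∀ y, adj x y → u y ≤ v y) : lap u x ≤ lap v x := by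
  have h1 := hnbr (x.1 + 1, x.2) (by simp [adj])
  have h2 := hnbr (x.1 - 1, x.2) (by simp [adj])
  have h3 := hnbr (x.1, x.2 + 1) (by simp [adj])
  have h4 := hnbr (x.1, x.2 - 1) (by simp [adj])
  simp only [lap, hx]
  omega

lemma lap_add_const (w : Z2 → ℤ) (c : ℤ) (x : Z2) : lap (fun y => w y + c) x = lap w x := by
  simp only [lap]
  ring

section Lowering

variable {Y : Set Z2} {v g : Z2 → ℤ} {x : Z2}

open scoped Classical in
noncomputable def lowerOn (Y : Set Z2) (v g : Z2 → ℤ) : Z2 → ℤ :=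
  Y.piecewise (fun y => min (v y) (g y)) v

lemma lowerOn_of_mem (hx : x ∈ Y) : lowerOn Y v g x = min (v x) (g x) := by
  classical
  exact Set.piecewise_eq_of_mem _ _ _ hx

lemma lowerOn_of_notMem (hx : x ∉ Y) : lowerOn Y v g x = v x := by
  classical
  exact Set.piecewise_eq_of_notMem _ _ _ hx

lemma lowerOn_le (x : Z2) : lowerOn Y v g x ≤ v x := by
  by_cases hx : x ∈ Y
  · rw [lowerOn_of_mem hx]
    exact min_le_left _ _
  · rw [lowerOn_of_notMem hx]

lemma lap_lowerOn_le_of_notMem (hx : x ∉ Y) : lap (lowerOn Y v g) x ≤ lap v x :=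
  lap_le_lap_of_eq_of_le (lowerOn_of_notMem hx) fun y _ => lowerOn_le y

lemma lap_lowerOn_le_of_mem (hx : x ∈ Y) (hout : ∀ y, adj x y → y ∉ Y → v y ≤ g y) :
    lap (lowerOn Y v g) x ≤ max (lap v x) (lap g x) := by
  rcases le_total (v x) (g x) with hvg | hgv
  · exact le_max_of_le_left <| lap_le_lap_of_eq_of_le
      (by rw [lowerOn_of_mem hx, min_eq_left hvg]) fun y _ => lowerOn_le y
  · refine le_max_of_le_right <| lap_le_lap_of_eq_of_le
      (by rw [lowerOn_of_mem hx, min_eq_right hgv]) fun y hxy => ?_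
    by_cases hy : y ∈ Y
    · rw [lowerOn_of_mem hy]
      exact min_le_right _ _
    · rw [lowerOn_of_notMem hy]
      exact hout y hxy hy

end Lowering

lemma qA_pt (A : Matrix (Fin 2) (Fin 2) ℝ) (x : Z2) :
    qA A (pt x) = (A 0 0 * x.1 ^ 2 + (A 0 1 + A 1 0) * x.1 * x.2 + A 1 1 * x.2 ^ 2) / 2 := by
  simp only [qA, pt, one_div, dotProduct, WithLp.equiv_symm_apply, WithLp.equiv_apply, mulVec,
    Fin.sum_univ_two, Fin.isValue, cons_val_zero, cons_val_one, cons_val_fin_one]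
  ring

-- `(ac - b²)X² + (bX + cY)² = c(aX² + 2bXY + cY²)`
lemma sq_le_of_quadratic_lt {a b c X Y K : ℝ} (hc : 0 < c) (hdet : 0 < a * c - b ^ 2)
    (h : a * X ^ 2 + 2 * b * X * Y + c * Y ^ 2 < K) : X ^ 2 ≤ c * K / (a * c - b ^ 2) := by
  rw [le_div_iff₀ hdet]
  nlinarith [sq_nonneg (b * X + c * Y)]

lemma finite_setOf_sq_le (M : ℝ) : {n : ℤ | (n : ℝ) ^ 2 ≤ M}.Finite := by
  refine (Set.finite_Icc (-⌈M⌉) ⌈M⌉).subset fun n hn => ?_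
  have hsq : ((n ^ 2 : ℤ) : ℝ) ≤ ⌈M⌉ := by exact_mod_cast hn.trans (Int.le_ceil M)
  have := Int.natAbs_le_self_sq n
  norm_cast at hsq
  exact ⟨by omega, by omega⟩

lemma elat_finite {A : Matrix (Fin 2) (Fin 2) ℝ} (hA : A.PosDef) (k : ℝ) :
    (Elat A k).Finite := by
  have hsymm : A 1 0 = A 0 1 := by simpa using (hA.1.apply 1 0).symm
  have hdet : 0 < A 0 0 * A 1 1 - A 0 1 ^ 2 := by
    simpa [Matrix.det_fin_two, hsymm, sq] using hA.det_pos
  refine ((finite_setOf_sq_le (A 1 1 * (2 * k) / (A 0 0 * A 1 1 - A 0 1 ^ 2))).prod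
      (finite_setOf_sq_le (A 0 0 * (2 * k) / (A 1 1 * A 0 0 - A 0 1 ^ 2)))).subset fun x hx => ?_
  have hq : qA A (pt x) < k := hx
  rw [qA_pt, hsymm] at hq
  exact ⟨sq_le_of_quadratic_lt (Y := (x.2 : ℝ)) hA.diag_pos hdet (by linarith),
    sq_le_of_quadratic_lt (X := (x.2 : ℝ)) (Y := (x.1 : ℝ)) hA.diag_pos (by linarith)
      (by linarith)⟩

section Comparison

variable {A : Matrix (Fin 2) (Fin 2) ℝ} {k : ℝ} {v w : Z2 → ℤ} {Y : Set Z2} {c : ℤ}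

lemma SolvesBVP.lowerOn (hv : SolvesBVP A k v) (hYE : Y ⊆ Elat A k)
    (hw : ∀ x ∈ Y, lap w x ≤ 3)
    (hc : ∀ z ∈ (Elat A k \ Y) ∪ outerBd (Elat A k), v z - w z ≤ c) :
    SolvesBVP A k (lowerOn Y v fun x => w x + c) := by
  refine ⟨fun x hx => ?_, fun x hx => ?_⟩
  · by_cases hxY : x ∈ Y
    · refine (lap_lowerOn_le_of_mem hxY fun z hxz hzY => ?_).trans ?_
      · have hz : z ∈ (Elat A k \ Y) ∪ outerBd (Elat A k) := by
          by_cases hzE : z ∈ Elat A k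
          · exact Or.inl ⟨hzE, hzY⟩
          · exact Or.inr ⟨hzE, x, hx, hxz⟩
        linarith [hc z hz]
      · rw [lap_add_const]
        exact max_le (hv.1 x hx) (hw x hxY)
    · exact (lap_lowerOn_le_of_notMem hxY).trans (hv.1 x hx)
  · rw [lowerOn_of_notMem fun hxY => hx (hYE hxY)]
    exact hv.2 x hx

lemma IsMinimalSolution.sub_le_of_sub_le_on_boundary (hv : IsMinimalSolution A k v)
    (hYE : Y ⊆ Elat A k) (hw : ∀ x ∈ Y, lap w x ≤ 3)
    (hc : ∀ z ∈ (Elat A k \ Y) ∪ outerBd (Elat A k), v z - w z ≤ c) {y : Z2}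
    (hy : y ∈ Y) : v y - w y ≤ c := by
  have := hv.2 _ (hv.1.lowerOn hYE hw hc) y
  rw [lowerOn_of_mem hy] at this
  omega

end Comparison

theorem minimal_solution_recurrent_general (A : Matrix (Fin 2) (Fin 2) ℝ)
    (hApd : A.PosDef) (k : ℝ)
    (v : Z2 → ℤ) (hv : IsMinimalSolution A k v) :
    RecurrentIn v (Elat A k) := by
  refine ⟨hv.1.1, fun w Y hYE _ hw y hy => ?_⟩
  have hE := elat_finite hApd k
  have hSfin : ((Elat A k \ Y) ∪ outerBd (Elat A k)).Finite :=
    (hE.subset Set.sdiff_subset).union (outerBd_finite hE)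
  have hSne : ((Elat A k \ Y) ∪ outerBd (Elat A k)).Nonempty :=
    (outerBd_nonempty hE ⟨y, hYE hy⟩).mono Set.subset_union_right
  obtain ⟨z, hz, hmax⟩ := Set.exists_max_image _ (fun z => v z - w z) hSfin hSne
  exact ⟨z, hz, hv.sub_le_of_sub_le_on_boundary hYE hw hmax hy⟩

theorem minimal_solution_recurrent (A : Matrix (Fin 2) (Fin 2) ℝ)
    (hA : A.IsSymm) (hApd : A.PosDef) (k : ℝ) (hk : 0 < k)
    (v : Z2 → ℤ) (hv : IsMinimalSolution A k v) :
    RecurrentIn v (Elat A k) :=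
  minimal_solution_recurrent_general A hApd k v hv
end

section
/- Let A be a real symmetric positive definite 2×2 matrix and k > 0, and let v be the minimal solution of the boundary value problem for E_{A,k}. Then v(y) = 0 for every y in the outer boundary ∂E_{A,k}. -/
open Matrix

theorem minimal_solution_zero_on_outer_boundary (A : Matrix (Fin 2) (Fin 2) ℝ)
    (hA : A.IsSymm) (hApd : A.PosDef) (k : ℝ) (hk : 0 < k)
    (v : Z2 → ℤ) (hv : IsMinimalSolution A k v) :
    ∀ y ∈ outerBd (Elat A k), v y = 0 := by
  intro y hy
  obtain ⟨⟨hlap, hnn⟩, hmin⟩ := hv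
  have hyE : y ∉ Elat A k := hy.1
  have hv0 : 0 ≤ v y := hnn y hyE
  set w : Z2 → ℤ := fun x => if x = y then 0 else v x with hw
  have hle : ∀ z, w z ≤ v z := by
    intro z
    by_cases h : z = y
    · simp [hw, h, hv0]
    · simp [hw, h]
  have hsol : SolvesBVP A k w := by
    constructor
    · intro x hx
      have hxy : x ≠ y := fun h => hyE (h ▸ hx)
      have hx0 : w x = v x := by simp [hw, hxy]
      have key : lap w x ≤ lap v x := by
        simp only [lap]
        linarith [hle (x.1 + 1, x.2), hle (x.1 - 1, x.2), hle (x.1, x.2 + 1),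
          hle (x.1, x.2 - 1), hx0.ge, hx0.le]
      exact key.trans (hlap x hx)
    · intro x hx
      by_cases h : x = y
      · simp [hw, h]
      · simpa [hw, h] using hnn x hx
  have h2 := hmin w hsol y
  have : w y = 0 := by simp [hw]
  omega
end

section
/- Let A be a real symmetric positive definite 2×2 matrix and k > 0, and let v be the minimal solution of the boundary value problem for E_{A,k}. Then: (a) the restriction of Δv to E_{A,k} has no forbidden subconfiguration; and (b) for every x ∈ E_{A,k}, Δv(x) = -4v(x) + Σ_{y∼x, y∈E_{A,k}} v(y), i.e., Δv restricted to E_{A,k} equals the reduced graph Laplacian applied to v|_{E_{A,k}}, so that Δv|_{E_{A,k}} lies in the image of the reduced Laplacian and hence its class in the sandpile group is the identity. -/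
open Matrix
open scoped Classical

/-- The reduced graph Laplacian on `X ⊆ ℤ²` (the sink absorbs everything off `X`):
`(Δ̃u)(x) = -4u(x) + Σ_{y∼x, y∈X} u(y)`. -/
noncomputable def redLap (X : Set Z2) (u : Z2 → ℤ) (x : Z2) : ℤ :=
  -(4 * u x) +
    ((if (x.1 + 1, x.2) ∈ X then u (x.1 + 1, x.2) else 0) +
     (if (x.1 - 1, x.2) ∈ X then u (x.1 - 1, x.2) else 0) +
     (if (x.1, x.2 + 1) ∈ X then u (x.1, x.2 + 1) else 0) +
     (if (x.1, x.2 - 1) ∈ X then u (x.1, x.2 - 1) else 0))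

lemma adj_iff (x y : Z2) : adj x y ↔
    y = (x.1+1,x.2) ∨ y = (x.1-1,x.2) ∨ y = (x.1,x.2+1) ∨ y = (x.1,x.2-1) := by
  unfold adj
  constructor
  · intro h
    rcases y with ⟨a, b⟩
    simp only [Prod.mk.injEq]
    omega
  · rintro (rfl|rfl|rfl|rfl) <;> simp <;> try omega

lemma indeg_eq (Y : Set Z2) (x : Z2) :
    (indeg Y x : ℤ) =
      (if (x.1+1,x.2) ∈ Y then 1 else 0) + (if (x.1-1,x.2) ∈ Y then 1 else 0) +
      (if (x.1,x.2+1) ∈ Y then 1 else 0) + (if (x.1,x.2-1) ∈ Y then 1 else 0) := by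
  have hset : {y : Z2 | adj x y ∧ y ∈ Y} =
      (↑(({(x.1+1,x.2),(x.1-1,x.2),(x.1,x.2+1),(x.1,x.2-1)} : Finset Z2).filter
        (fun y => y ∈ Y)) : Set Z2) := by
    ext y
    simp only [Set.mem_setOf_eq, Finset.coe_filter, adj_iff, Finset.mem_insert,
      Finset.mem_singleton]

  unfold indeg
  rw [hset, Set.ncard_coe_finset, Finset.card_filter]
  have d1 : ((x.1+1,x.2):Z2) ∉ ({(x.1-1,x.2),(x.1,x.2+1),(x.1,x.2-1)} : Finset Z2) := by
    simp [Prod.ext_iff]; try omega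
  have d2 : ((x.1-1,x.2):Z2) ∉ ({(x.1,x.2+1),(x.1,x.2-1)} : Finset Z2) := by
    simp [Prod.ext_iff]; try omega
  have d3 : ((x.1,x.2+1):Z2) ∉ ({(x.1,x.2-1)} : Finset Z2) := by
    simp [Prod.ext_iff]; try omega
  rw [Finset.sum_insert d1, Finset.sum_insert d2, Finset.sum_insert d3,
    Finset.sum_singleton]
  push_cast
  ring

theorem minimal_solution_is_identity (A : Matrix (Fin 2) (Fin 2) ℝ)
    (hA : A.IsSymm) (hApd : A.PosDef) (k : ℝ) (hk : 0 < k)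
    (v : Z2 → ℤ) (hv : IsMinimalSolution A k v) :
    ¬ HasForbiddenSubconfig (Elat A k) (lap v) ∧
    (∀ x ∈ Elat A k, lap v x = redLap (Elat A k) v x) ∧
    (∃ u : Z2 → ℤ, ∀ x ∈ Elat A k, lap v x = redLap (Elat A k) u x) := by
  obtain ⟨⟨hlap, hnn⟩, hmin⟩ := hv
  -- Part (a)
  have parta : ¬ HasForbiddenSubconfig (Elat A k) (lap v) := by
    rintro ⟨Y, hYE, ⟨y₀, hy₀⟩, hforb⟩
    set w : Z2 → ℤ := fun z => if z ∈ Y then v z - 1 else v z with hw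
    have key : ∀ x : Z2, lap w x = lap v x + 4 * (if x ∈ Y then 1 else 0) -
        ((if (x.1+1,x.2) ∈ Y then 1 else 0) + (if (x.1-1,x.2) ∈ Y then 1 else 0) +
         (if (x.1,x.2+1) ∈ Y then 1 else 0) + (if (x.1,x.2-1) ∈ Y then 1 else 0)) := by
      intro x
      simp only [lap, hw]
      split_ifs <;> ring
    have hsol : SolvesBVP A k w := by
      constructor
      · intro x hx
        rw [key]
        by_cases hxY : x ∈ Y
        · have h1 := hforb x hxY
          rw [indeg_eq] at h1
          simp only [hxY, if_pos]
          omega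
        · simp only [hxY, if_neg, not_false_iff, mul_zero, add_zero]
          have := hlap x hx
          split_ifs <;> omega
      · intro x hx
        have hxY : x ∉ Y := fun h => hx (hYE h)
        simp only [hw, hxY, if_neg, not_false_iff]
        exact hnn x hx
    have := hmin w hsol y₀
    simp only [hw, hy₀, if_pos] at this
    omega
  -- v vanishes outside the ellipse
  have hzero : ∀ y, y ∉ Elat A k → v y = 0 := by
    intro y₀ hy₀
    set w : Z2 → ℤ := fun z => if z = y₀ then 0 else v z with hw
    have hle : ∀ n, w n ≤ v n := by
      intro n
      simp only [hw]
      split_ifs with h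
      · subst h; exact hnn n hy₀
      · exact le_refl _
    have hsol : SolvesBVP A k w := by
      constructor
      · intro x hx
        have hxne : x ≠ y₀ := fun h => hy₀ (h ▸ hx)
        have hwx : w x = v x := by simp only [hw, hxne, if_neg, not_false_iff]
        have h1 := hle (x.1+1, x.2)
        have h2 := hle (x.1-1, x.2)
        have h3 := hle (x.1, x.2+1)
        have h4 := hle (x.1, x.2-1)
        have := hlap x hx
        simp only [lap] at *
        omega
      · intro x hx
        simp only [hw]
        split_ifs with h
        · exact le_refl 0
        · exact hnn x hx
    have h1 := hmin w hsol y₀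
    have h2 := hnn y₀ hy₀
    simp only [hw, if_pos rfl] at h1
    omega
  have partb : ∀ x ∈ Elat A k, lap v x = redLap (Elat A k) v x := by
    intro x hx
    have e : ∀ n : Z2, (if n ∈ Elat A k then v n else 0) = v n := by
      intro n
      split_ifs with h
      · rfl
      · exact (hzero n h).symm
    simp only [lap, redLap, e]
  exact ⟨parta, partb, v, partb⟩
end

section
/- Let k > 0 and let λ1, λ2 be reals with 1/√2 ≤ λ1 ≤ λ2 and λ2 > 1. Define M(x) = √((2k + (λ2−λ1)x²)/(2λ2)) + √(2kλ2 − λ1(λ2−λ1)x²) for x ∈ [−√(2k/λ1), √(2k/λ1)]. Then for every x in this interval, M(x) ≤ M(0) = √(k/λ2) + √(2kλ2). -/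
/-!
Write `t = x²`. Both radicands are affine in `t`, and moving away from `t = 0` the first one grows
at exactly `1 / (2λ₁λ₂)` times the rate at which the second one shrinks. Comparing the two
differences of square roots through `√A - √A₀ = (A - A₀) / (√A + √A₀)`, the loss in the second
root outweighs the gain in the first as soon as `√(2kλ₂) ≤ 2λ₁λ₂ √(k/λ₂)`, i.e. `1 ≤ 2λ₁²`.
-/

open Real

theorem add_le_add_of_sq_sub_sq_eq {a₀ a b b₀ c : ℝ} (ha₀ : 0 ≤ a₀) (ha : a₀ ≤ a) (hb : 0 ≤ b)
    (hb₀ : 0 < b₀) (hc : 0 ≤ c) (h : b₀ ^ 2 - b ^ 2 = c * (a ^ 2 - a₀ ^ 2)) (hbase : b₀ ≤ c * a₀) :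
    a + b ≤ a₀ + b₀ := by
  have hbb₀ : b ≤ b₀ := by
    nlinarith [mul_nonneg hc (mul_nonneg (sub_nonneg.2 ha) (by linarith : 0 ≤ a + a₀))]
  have hsum : b₀ + b ≤ c * (a + a₀) := by nlinarith [mul_le_mul_of_nonneg_left ha hc]
  have hmul : (a - a₀) * (b₀ + b) ≤ (b₀ - b) * (b₀ + b) :=
    calc (a - a₀) * (b₀ + b) ≤ (a - a₀) * (c * (a + a₀)) :=
          mul_le_mul_of_nonneg_left hsum (sub_nonneg.2 ha)
      _ = (b₀ - b) * (b₀ + b) := by linear_combination -h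
  linarith [le_of_mul_le_mul_right hmul (by linarith : 0 < b₀ + b)]

theorem Real.sqrt_add_sqrt_le_of_sub_eq {A₀ A B B₀ c : ℝ} (hA₀ : 0 ≤ A₀) (hA : A₀ ≤ A)
    (hB : 0 ≤ B) (hB₀ : 0 < B₀) (hc : 0 ≤ c) (h : B₀ - B = c * (A - A₀))
    (hbase : √B₀ ≤ c * √A₀) : √A + √B ≤ √A₀ + √B₀ := by
  refine add_le_add_of_sq_sub_sq_eq (sqrt_nonneg _) (sqrt_le_sqrt hA) (sqrt_nonneg _)
    (sqrt_pos.2 hB₀) hc ?_ hbase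
  rwa [sq_sqrt hA₀, sq_sqrt (hA₀.trans hA), sq_sqrt hB, sq_sqrt hB₀.le]

theorem ellipse_sqrt_sum_le_at_zero {k l1 l2 t : ℝ} (hk : 0 < k) (hl1 : 0 < l1)
    (h1 : 1 ≤ 2 * l1 ^ 2) (h12 : l1 ≤ l2) (ht : 0 ≤ t) (htk : l1 * t ≤ 2 * k) :
    √((2 * k + (l2 - l1) * t) / (2 * l2)) + √(2 * k * l2 - l1 * (l2 - l1) * t) ≤
      √(k / l2) + √(2 * k * l2) := by
  have hl2 : 0 < l2 := hl1.trans_le h12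
  refine sqrt_add_sqrt_le_of_sub_eq (c := 2 * l1 * l2) (by positivity) ?_ ?_ (by positivity)
    (by positivity) ?_ ?_
  · rw [div_le_div_iff₀ hl2 (by positivity)]
    nlinarith [mul_nonneg (mul_nonneg (sub_nonneg.2 h12) ht) hl2.le]
  · nlinarith [mul_le_mul_of_nonneg_left htk hl2.le, mul_nonneg (sq_nonneg l1) ht]
  · field_simp
    ring
  · have hsq : (2 * l1 * l2 * √(k / l2)) ^ 2 = 4 * l1 ^ 2 * l2 * k := by
      rw [mul_pow, sq_sqrt (by positivity)]
      field_simp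
      norm_num
    rw [sqrt_le_left (by positivity), hsq]
    nlinarith [mul_pos hk hl2]

theorem M_max_at_zero_general (k l1 l2 : ℝ) (hk : 0 < k)
    (h1 : 1 / Real.sqrt 2 ≤ l1) (h12 : l1 ≤ l2) :
    (∀ x ∈ Set.Icc (-Real.sqrt (2 * k / l1)) (Real.sqrt (2 * k / l1)),
        Real.sqrt ((2 * k + (l2 - l1) * x ^ 2) / (2 * l2)) +
            Real.sqrt (2 * k * l2 - l1 * (l2 - l1) * x ^ 2) ≤
          Real.sqrt ((2 * k + (l2 - l1) * (0 : ℝ) ^ 2) / (2 * l2)) +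
            Real.sqrt (2 * k * l2 - l1 * (l2 - l1) * (0 : ℝ) ^ 2)) ∧
    Real.sqrt ((2 * k + (l2 - l1) * (0 : ℝ) ^ 2) / (2 * l2)) +
        Real.sqrt (2 * k * l2 - l1 * (l2 - l1) * (0 : ℝ) ^ 2) =
      Real.sqrt (k / l2) + Real.sqrt (2 * k * l2) := by
  have hl1 : 0 < l1 := lt_of_lt_of_le (by positivity) h1
  have hl1_sq : 1 ≤ 2 * l1 ^ 2 := by
    nlinarith [(div_le_iff₀ (by positivity)).1 h1, sq_sqrt (zero_le_two : (0 : ℝ) ≤ 2)]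
  have hM0 : Real.sqrt ((2 * k + (l2 - l1) * (0 : ℝ) ^ 2) / (2 * l2)) +
      Real.sqrt (2 * k * l2 - l1 * (l2 - l1) * (0 : ℝ) ^ 2) =
      Real.sqrt (k / l2) + Real.sqrt (2 * k * l2) := by
    rw [zero_pow two_ne_zero, mul_zero, add_zero, mul_zero, sub_zero,
      mul_div_mul_left k l2 two_ne_zero]
  refine ⟨fun x hx => ?_, hM0⟩
  have hx : x ^ 2 ≤ 2 * k / l1 := by
    simpa [sq_sqrt (by positivity : 0 ≤ 2 * k / l1)] using sq_le_sq' hx.1 hx.2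
  rw [hM0]
  exact ellipse_sqrt_sum_le_at_zero hk hl1 hl1_sq h12 (sq_nonneg x)
    (by rwa [le_div_iff₀ hl1, mul_comm] at hx)

theorem M_max_at_zero (k l1 l2 : ℝ) (hk : 0 < k)
    (h1 : 1 / Real.sqrt 2 ≤ l1) (h12 : l1 ≤ l2) (h2 : 1 < l2) :
    (∀ x ∈ Set.Icc (-Real.sqrt (2 * k / l1)) (Real.sqrt (2 * k / l1)),
        Real.sqrt ((2 * k + (l2 - l1) * x ^ 2) / (2 * l2)) +
            Real.sqrt (2 * k * l2 - l1 * (l2 - l1) * x ^ 2) ≤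
          Real.sqrt ((2 * k + (l2 - l1) * (0 : ℝ) ^ 2) / (2 * l2)) +
            Real.sqrt (2 * k * l2 - l1 * (l2 - l1) * (0 : ℝ) ^ 2)) ∧
    Real.sqrt ((2 * k + (l2 - l1) * (0 : ℝ) ^ 2) / (2 * l2)) +
        Real.sqrt (2 * k * l2 - l1 * (l2 - l1) * (0 : ℝ) ^ 2) =
      Real.sqrt (k / l2) + Real.sqrt (2 * k * l2) :=
  M_max_at_zero_general k l1 l2 hk h1 h12
end
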